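/- For real $z > 3 + \sqrt{8}$, the Stieltjes transform of the Marčenko-Pastur density equals the closed form: $\int_a^b \frac{\rho(\lambda)}{z - \lambda}\, d\lambda = \frac{1}{2z}\left(z - 1 - \sqrt{z^2 - 6z + 1}\right)$, where $a = 3-\sqrt{8}$, $b = 3+\sqrt{8}$ and $\rho(\lambda) = \frac{\sqrt{(\lambda-a)(b-\lambda)}}{2\pi\lambda}$. -/

import Mathlib

/-- The Marčenko-Pastur type density supported on `[3-√8, 3+√8]`. -/
noncomputable def mpDensity (lam : ℝ) : ℝ :=
  Real.sqrt ((lam - (3 - Real.sqrt 8)) * ((3 + Real.sqrt 8) - lam)) / (2 * Real.pi * lam)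

/-! The density ρ is √((λ-a)(b-λ))/(2πλ) and 1/(λ(z-λ)) = (1/λ + 1/(z-λ))/z, so the
Stieltjes transform is a combination of the integrals `∫ₐᵇ √((x-a)(b-x))/(x-c) dx` with a
pole `c` outside `[a, b]`: at `c = 0` and at `c = z`. For `c < a` that integral equals
`π((a+b)/2 - c - √((a-c)(b-c)))`, by an explicit primitive built from `√((x-a)(b-x))` and two
arcsines; the pole `z > b` is reduced to this case by the reflection `x ↦ a + b - x`.
For the Marčenko–Pastur endpoints `ab = 1` and `(z-a)(z-b) = z² - 6z + 1`, which gives the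
closed form. -/

open Real Set intervalIntegral

lemma hasDerivAt_arcsin_comp {g : ℝ → ℝ} {g' w x : ℝ} (hg : HasDerivAt g g' x) (hw : 0 < w)
    (h : 1 - g x ^ 2 = w ^ 2) : HasDerivAt (fun y => arcsin (g y)) (g' / w) x := by
  have hne : ∀ u : ℝ, u ^ 2 = 1 → g x ≠ u := by
    rintro u hu rfl
    nlinarith
  refine ((hasDerivAt_arcsin (hne _ (by norm_num)) (hne _ (by norm_num))).comp x hg).congr_deriv
    ?_
  rw [h, sqrt_sq hw.le]
  ring

/- With `R = (x-a)(b-x)`, `t = x - c` and `d² = (a-c)(b-c)` one has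
`R = -t² + (a+b-2c) t - d²`, so `√R / t = (-(x - (a+b)/2) + ((a+b)/2 - c) - d²/t) / √R`;
the three terms are the derivatives of the three summands below. -/
noncomputable def sqrtQuadPrimitive (a b c x : ℝ) : ℝ :=
  √((x - a) * (b - x)) + ((a + b) / 2 - c) * arcsin ((2 * x - a - b) / (b - a))
    - √((a - c) * (b - c)) *
      arcsin (((a + b - 2 * c) * (x - c) - 2 * ((a - c) * (b - c))) / ((b - a) * (x - c)))

section

variable {a b c : ℝ}

lemma hasDerivAt_sqrtQuadPrimitive {x : ℝ} (hc : c < a) (hx : x ∈ Ioo a b) :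
    HasDerivAt (sqrtQuadPrimitive a b c) (√((x - a) * (b - x)) / (x - c)) x := by
  obtain ⟨hax, hxb⟩ := hx
  have hba : 0 < b - a := by linarith
  have ht : 0 < x - c := by linarith
  have hR : 0 < (x - a) * (b - x) := mul_pos (by linarith) (by linarith)
  have hdd : 0 < (a - c) * (b - c) := mul_pos (by linarith) (by linarith)
  set S := √((x - a) * (b - x))
  set d := √((a - c) * (b - c))
  have hS : 0 < S := sqrt_pos.mpr hR
  have hd : 0 < d := sqrt_pos.mpr hdd
  have hS2 : S ^ 2 = (x - a) * (b - x) := sq_sqrt hR.le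
  have hd2 : d ^ 2 = (a - c) * (b - c) := sq_sqrt hdd.le
  have h1 : HasDerivAt (fun y => √((y - a) * (b - y))) ((a + b - 2 * x) / (2 * S)) x := by
    have hp : HasDerivAt (fun y => (y - a) * (b - y)) (1 * (b - x) + (x - a) * -1) x :=
      ((hasDerivAt_id' x).sub_const a).mul ((hasDerivAt_id' x).const_sub b)
    refine (hp.sqrt hR.ne').congr_deriv ?_
    ring
  have h2 : HasDerivAt (fun y => arcsin ((2 * y - a - b) / (b - a)))
      (2 / (b - a) / (2 * S / (b - a))) x := by
    refine hasDerivAt_arcsin_comp ?_ (by positivity) ?_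
    · simpa using ((((hasDerivAt_id x).const_mul 2).sub_const a).sub_const b).div_const (b - a)
    · rw [div_pow, div_pow, mul_pow, hS2]
      field_simp
      ring
  have h3 : HasDerivAt
      (fun y =>
        arcsin (((a + b - 2 * c) * (y - c) - 2 * ((a - c) * (b - c))) / ((b - a) * (y - c))))
      (2 * ((a - c) * (b - c)) * (b - a) / ((b - a) * (x - c)) ^ 2
        / (2 * d * S / ((b - a) * (x - c)))) x := by
    refine hasDerivAt_arcsin_comp ?_ (by positivity) ?_
    · have hn : HasDerivAt (fun y => (a + b - 2 * c) * (y - c) - 2 * ((a - c) * (b - c)))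
          (a + b - 2 * c) x := by
        simpa using (((hasDerivAt_id' x).sub_const c).const_mul (a + b - 2 * c)).sub_const
          (2 * ((a - c) * (b - c)))
      have hq : HasDerivAt (fun y => (b - a) * (y - c)) (b - a) x := by
        simpa using ((hasDerivAt_id' x).sub_const c).const_mul (b - a)
      refine (hn.div hq (by positivity)).congr_deriv ?_
      ring
    · rw [div_pow, div_pow, mul_pow, mul_pow, mul_pow, hS2, hd2]
      field_simp
      ring
  refine ((h1.add (h2.const_mul _)).sub (h3.const_mul d)).congr_deriv ?_
  field_simp
  linear_combination -2 * hS2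

lemma continuousOn_sqrtQuadPrimitive (hc : c < a) (hab : a < b) :
    ContinuousOn (sqrtQuadPrimitive a b c) (Icc a b) := by
  have hden : ∀ x ∈ Icc a b, (b - a) * (x - c) ≠ 0 := fun x hx =>
    (mul_pos (sub_pos.mpr hab) (by linarith [hx.1])).ne'
  unfold sqrtQuadPrimitive
  refine ContinuousOn.sub (by fun_prop) ?_
  exact continuousOn_const.mul
    (continuous_arcsin.comp_continuousOn (ContinuousOn.div (by fun_prop) (by fun_prop) hden))

lemma intervalIntegrable_sqrt_mul_div_sub (hc : c ∉ uIcc a b) :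
    IntervalIntegrable (fun x => √((x - a) * (b - x)) / (x - c)) MeasureTheory.volume a b :=
  (ContinuousOn.div (by fun_prop) (by fun_prop) fun _ hx =>
    sub_ne_zero.mpr (ne_of_mem_of_not_mem hx hc)).intervalIntegrable

lemma integral_sqrt_mul_div_sub_of_lt (hc : c < a) (hab : a < b) :
    ∫ x in a..b, √((x - a) * (b - x)) / (x - c) =
      π * ((a + b) / 2 - c - √((a - c) * (b - c))) := by
  have hc' : c ∉ uIcc a b := fun h => by
    rw [uIcc_of_le hab.le] at h
    linarith [h.1]
  rw [integral_eq_sub_of_hasDerivAt_of_le hab.le (continuousOn_sqrtQuadPrimitive hc hab)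
    (fun x hx => hasDerivAt_sqrtQuadPrimitive hc hx) (intervalIntegrable_sqrt_mul_div_sub hc')]
  have hne : (b - a) * (b - c) ≠ 0 := (mul_pos (by linarith) (by linarith)).ne'
  have hne' : (b - a) * (a - c) ≠ 0 := (mul_pos (by linarith) (by linarith)).ne'
  have h1 : (2 * b - a - b) / (b - a) = 1 := by rw [div_eq_one_iff_eq (by linarith)]; ring
  have h2 : (2 * a - a - b) / (b - a) = -1 := by rw [div_eq_iff (by linarith)]; ring
  have h3 :
      ((a + b - 2 * c) * (b - c) - 2 * ((a - c) * (b - c))) / ((b - a) * (b - c)) = 1 := by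
    rw [div_eq_one_iff_eq hne]; ring
  have h4 :
      ((a + b - 2 * c) * (a - c) - 2 * ((a - c) * (b - c))) / ((b - a) * (a - c)) = -1 := by
    rw [div_eq_iff hne']; ring
  simp only [sqrtQuadPrimitive, h1, h2, h3, h4, sub_self, mul_zero, zero_mul, sqrt_zero,
    arcsin_one, arcsin_neg_one]
  ring

lemma integral_sqrt_mul_div_sub_of_gt {z : ℝ} (hz : b < z) (hab : a < b) :
    ∫ x in a..b, √((x - a) * (b - x)) / (z - x) =
      π * (z - (a + b) / 2 - √((z - a) * (z - b))) := by
  have hrefl := integral_comp_sub_left (a := a) (b := b)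
    (fun x => √((x - a) * (b - x)) / (x - (a + b - z))) (a + b)
  simp only [add_sub_cancel_right, add_sub_cancel_left] at hrefl
  rw [integral_sqrt_mul_div_sub_of_lt (by linarith) hab,
    show (a - (a + b - z)) * (b - (a + b - z)) = (z - a) * (z - b) by ring] at hrefl
  convert hrefl using 1
  · congr 1 with x
    ring_nf
  · ring

end

theorem stmt_15 (z : ℝ) (hz : 3 + Real.sqrt 8 < z) :
    ∫ lam in (3 - Real.sqrt 8)..(3 + Real.sqrt 8), mpDensity lam / (z - lam)
      = (z - 1 - Real.sqrt (z ^ 2 - 6 * z + 1)) / (2 * z) := by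
  have h8 : √8 ^ 2 = 8 := sq_sqrt (by norm_num)
  have hs : 0 < √8 := by positivity
  have ha : 0 < 3 - √8 := by nlinarith
  have hab : 3 - √8 < 3 + √8 := by linarith
  have hz0 : 0 < z := by linarith
  have hsplit : ∀ l ∈ uIcc (3 - √8) (3 + √8), mpDensity l / (z - l) =
      (√((l - (3 - √8)) * (3 + √8 - l)) / (l - 0)
        + √((l - (3 - √8)) * (3 + √8 - l)) / (z - l)) / (2 * π * z) := by
    intro l hl
    rw [uIcc_of_le hab.le] at hl
    have hl0 : l ≠ 0 := by linarith [hl.1]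
    have hlz : z - l ≠ 0 := by linarith [hl.2]
    unfold mpDensity
    field_simp
    ring
  have hint0 := intervalIntegrable_sqrt_mul_div_sub (a := 3 - √8) (b := 3 + √8) (c := 0)
    (fun h => by rw [uIcc_of_le hab.le] at h; linarith [h.1])
  have hintz : IntervalIntegrable (fun l => √((l - (3 - √8)) * (3 + √8 - l)) / (z - l))
      MeasureTheory.volume (3 - √8) (3 + √8) := by
    have := (intervalIntegrable_sqrt_mul_div_sub (a := 3 - √8) (b := 3 + √8) (c := z)
      (fun h => by rw [uIcc_of_le hab.le] at h; linarith [h.2])).neg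
    convert this using 1
    ext l
    rw [Pi.neg_apply, ← div_neg, neg_sub]
  rw [integral_congr hsplit, intervalIntegral.integral_div, integral_add hint0 hintz,
    integral_sqrt_mul_div_sub_of_lt ha hab, integral_sqrt_mul_div_sub_of_gt hz hab,
    show (3 - √8 - 0) * (3 + √8 - 0) = 1 by linear_combination -h8,
    show (z - (3 - √8)) * (z - (3 + √8)) = z ^ 2 - 6 * z + 1 by linear_combination -h8]
  field_simp
  ring
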